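/- The automorphism group of the Moebius–Kantor graph has order 96. -/

import Mathlib

/-- The Moebius–Kantor graph, described as the graph on `ZMod 16` given by the
16-cycle `i – (i+1)` together with chords joining `i` to `i + 5` for each even `i`
(this is the generalized Petersen graph `GP(8,3)`). -/
def moebiusKantorGraph : SimpleGraph (ZMod 16) where
  Adj i j := (j = i + 1 ∨ i = j + 1) ∨ (Even i.val ∧ j = i + 5) ∨ (Even j.val ∧ i = j + 5)
  symm := ⟨by intro a b h; revert a b h; decide⟩
  loopless := ⟨by intro a h; revert a h; decide⟩

instance : DecidableRel moebiusKantorGraph.Adj := fun i j =>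
  inferInstanceAs (Decidable ((j = i + 1 ∨ i = j + 1) ∨
    (Even i.val ∧ j = i + 5) ∨ (Even j.val ∧ i = j + 5)))

namespace MKAux

abbrev G := moebiusKantorGraph
abbrev Aut := moebiusKantorGraph ≃g moebiusKantorGraph

/-- "there is a walk of length 2 from x to y" -/
def d2 (x y : ZMod 16) : Prop := ∃ w, G.Adj x w ∧ G.Adj w y

instance (x y : ZMod 16) : Decidable (d2 x y) :=
  inferInstanceAs (Decidable (∃ w, G.Adj x w ∧ G.Adj w y))

lemma adj_iso (e : Aut) (x y : ZMod 16) : G.Adj (e x) (e y) ↔ G.Adj x y :=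
  e.map_rel_iff

lemma d2_iso_mp (e : Aut) (x y : ZMod 16) : d2 x y → d2 (e x) (e y) := by
  rintro ⟨w, h1, h2⟩
  exact ⟨e w, (adj_iso e x w).mpr h1, (adj_iso e w y).mpr h2⟩

lemma d2_iso (e : Aut) (x y : ZMod 16) : d2 (e x) (e y) ↔ d2 x y := by
  constructor
  · intro h
    have := d2_iso_mp e.symm _ _ h
    simpa using this
  · exact d2_iso_mp e x y

lemma adj_iso' (e : Aut) (x y z : ZMod 16) (hz : e y = z) :
    G.Adj (e x) z ↔ G.Adj x y := hz ▸ adj_iso e x y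

lemma d2_iso' (e : Aut) (x y z : ZMod 16) (hz : e y = z) :
    d2 (e x) z ↔ d2 x y := hz ▸ d2_iso e x y

lemma ne_of_fix (e : Aut) (x y z : ZMod 16) (hz : e y = z) (h : x ≠ y) :
    e x ≠ z := fun hh => h (e.injective (hh.trans hz.symm))

lemma step8 : ∀ x : ZMod 16, (x ≠ 0 ∧ x ≠ 1 ∧ x ≠ 2 ∧ (G.Adj x 0 ↔ G.Adj (8:ZMod 16) 0) ∧ (d2 x 0 ↔ d2 (8:ZMod 16) 0) ∧ (G.Adj x 1 ↔ G.Adj (8:ZMod 16) 1) ∧ (d2 x 1 ↔ d2 (8:ZMod 16) 1) ∧ (G.Adj x 2 ↔ G.Adj (8:ZMod 16) 2) ∧ (d2 x 2 ↔ d2 (8:ZMod 16) 2)) → x = 8 := by decide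

lemma step3 : ∀ x : ZMod 16, (x ≠ 0 ∧ x ≠ 1 ∧ x ≠ 2 ∧ x ≠ 8 ∧ (G.Adj x 0 ↔ G.Adj (3:ZMod 16) 0) ∧ (G.Adj x 1 ↔ G.Adj (3:ZMod 16) 1) ∧ (G.Adj x 2 ↔ G.Adj (3:ZMod 16) 2) ∧ (G.Adj x 8 ↔ G.Adj (3:ZMod 16) 8)) → x = 3 := by decide

lemma step6 : ∀ x : ZMod 16, (x ≠ 0 ∧ x ≠ 1 ∧ x ≠ 2 ∧ x ≠ 8 ∧ x ≠ 3 ∧ (G.Adj x 0 ↔ G.Adj (6:ZMod 16) 0) ∧ (d2 x 0 ↔ d2 (6:ZMod 16) 0) ∧ (G.Adj x 1 ↔ G.Adj (6:ZMod 16) 1) ∧ (G.Adj x 2 ↔ G.Adj (6:ZMod 16) 2) ∧ (d2 x 2 ↔ d2 (6:ZMod 16) 2) ∧ (G.Adj x 3 ↔ G.Adj (6:ZMod 16) 3) ∧ (G.Adj x 8 ↔ G.Adj (6:ZMod 16) 8)) → x = 6 := by decide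

lemma step4 : ∀ x : ZMod 16, (x ≠ 0 ∧ x ≠ 1 ∧ x ≠ 2 ∧ x ≠ 8 ∧ x ≠ 3 ∧ x ≠ 6 ∧ (G.Adj x 0 ↔ G.Adj (4:ZMod 16) 0) ∧ (G.Adj x 1 ↔ G.Adj (4:ZMod 16) 1) ∧ (G.Adj x 2 ↔ G.Adj (4:ZMod 16) 2) ∧ (G.Adj x 3 ↔ G.Adj (4:ZMod 16) 3) ∧ (d2 x 6 ↔ d2 (4:ZMod 16) 6) ∧ (G.Adj x 8 ↔ G.Adj (4:ZMod 16) 8)) → x = 4 := by decide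

lemma step5 : ∀ x : ZMod 16, (x ≠ 0 ∧ x ≠ 1 ∧ x ≠ 2 ∧ x ≠ 8 ∧ x ≠ 3 ∧ x ≠ 6 ∧ x ≠ 4 ∧ (G.Adj x 0 ↔ G.Adj (5:ZMod 16) 0) ∧ (G.Adj x 6 ↔ G.Adj (5:ZMod 16) 6)) → x = 5 := by decide

lemma step7 : ∀ x : ZMod 16, (x ≠ 0 ∧ x ≠ 1 ∧ x ≠ 2 ∧ x ≠ 8 ∧ x ≠ 3 ∧ x ≠ 6 ∧ x ≠ 4 ∧ x ≠ 5 ∧ (G.Adj x 0 ↔ G.Adj (7:ZMod 16) 0) ∧ (G.Adj x 1 ↔ G.Adj (7:ZMod 16) 1) ∧ (G.Adj x 2 ↔ G.Adj (7:ZMod 16) 2)) → x = 7 := by decide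

lemma step9 : ∀ x : ZMod 16, (x ≠ 0 ∧ x ≠ 1 ∧ x ≠ 2 ∧ x ≠ 8 ∧ x ≠ 3 ∧ x ≠ 6 ∧ x ≠ 4 ∧ x ≠ 5 ∧ x ≠ 7 ∧ (G.Adj x 0 ↔ G.Adj (9:ZMod 16) 0) ∧ (G.Adj x 1 ↔ G.Adj (9:ZMod 16) 1) ∧ (G.Adj x 4 ↔ G.Adj (9:ZMod 16) 4) ∧ (G.Adj x 8 ↔ G.Adj (9:ZMod 16) 8)) → x = 9 := by decide

lemma step10 : ∀ x : ZMod 16, (x ≠ 0 ∧ x ≠ 1 ∧ x ≠ 2 ∧ x ≠ 8 ∧ x ≠ 3 ∧ x ≠ 6 ∧ x ≠ 4 ∧ x ≠ 5 ∧ x ≠ 7 ∧ x ≠ 9 ∧ (G.Adj x 0 ↔ G.Adj (10:ZMod 16) 0) ∧ (G.Adj x 1 ↔ G.Adj (10:ZMod 16) 1) ∧ (G.Adj x 3 ↔ G.Adj (10:ZMod 16) 3) ∧ (G.Adj x 6 ↔ G.Adj (10:ZMod 16) 6) ∧ (G.Adj x 8 ↔ G.Adj (10:ZMod 16) 8)) →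 x = 10 := by decide

lemma step11 : ∀ x : ZMod 16, (x ≠ 0 ∧ x ≠ 1 ∧ x ≠ 2 ∧ x ≠ 8 ∧ x ≠ 3 ∧ x ≠ 6 ∧ x ≠ 4 ∧ x ≠ 5 ∧ x ≠ 7 ∧ x ≠ 9 ∧ x ≠ 10 ∧ (G.Adj x 0 ↔ G.Adj (11:ZMod 16) 0) ∧ (G.Adj x 1 ↔ G.Adj (11:ZMod 16) 1) ∧ (G.Adj x 3 ↔ G.Adj (11:ZMod 16) 3) ∧ (G.Adj x 8 ↔ G.Adj (11:ZMod 16) 8)) → x = 11 := by decide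

lemma step12 : ∀ x : ZMod 16, (x ≠ 0 ∧ x ≠ 1 ∧ x ≠ 2 ∧ x ≠ 8 ∧ x ≠ 3 ∧ x ≠ 6 ∧ x ≠ 4 ∧ x ≠ 5 ∧ x ≠ 7 ∧ x ≠ 9 ∧ x ≠ 10 ∧ x ≠ 11 ∧ (G.Adj x 0 ↔ G.Adj (12:ZMod 16) 0) ∧ (G.Adj x 1 ↔ G.Adj (12:ZMod 16) 1)) → x = 12 := by decide

lemma step13 : ∀ x : ZMod 16, (x ≠ 0 ∧ x ≠ 1 ∧ x ≠ 2 ∧ x ≠ 8 ∧ x ≠ 3 ∧ x ≠ 6 ∧ x ≠ 4 ∧ x ≠ 5 ∧ x ≠ 7 ∧ x ≠ 9 ∧ x ≠ 10 ∧ x ≠ 11 ∧ x ≠ 12 ∧ (G.Adj x 0 ↔ G.Adj (13:ZMod 16) 0) ∧ (G.Adj x 8 ↔ G.Adj (13:ZMod 16) 8)) → x = 13 := by decide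

lemma step14 : ∀ x : ZMod 16, (x ≠ 0 ∧ x ≠ 1 ∧ x ≠ 2 ∧ x ≠ 8 ∧ x ≠ 3 ∧ x ≠ 6 ∧ x ≠ 4 ∧ x ≠ 5 ∧ x ≠ 7 ∧ x ≠ 9 ∧ x ≠ 10 ∧ x ≠ 11 ∧ x ≠ 12 ∧ x ≠ 13 ∧ (G.Adj x 0 ↔ G.Adj (14:ZMod 16) 0)) → x = 14 := by decide

lemma step15 : ∀ x : ZMod 16, (x ≠ 0 ∧ x ≠ 1 ∧ x ≠ 2 ∧ x ≠ 8 ∧ x ≠ 3 ∧ x ≠ 6 ∧ x ≠ 4 ∧ x ≠ 5 ∧ x ≠ 7 ∧ x ≠ 9 ∧ x ≠ 10 ∧ x ≠ 11 ∧ x ≠ 12 ∧ x ≠ 13 ∧ x ≠ 14) → x = 15 := by decide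

lemma rigid (e : Aut) (h0 : e 0 = 0) (h1 : e 1 = 1) (h2 : e 2 = 2) : ∀ v, e v = v := by
  have h8 : e 8 = 8 := step8 (e 8) ⟨ne_of_fix e 8 0 0 h0 (by decide), ne_of_fix e 8 1 1 h1 (by decide), ne_of_fix e 8 2 2 h2 (by decide), adj_iso' e 8 0 0 h0, d2_iso' e 8 0 0 h0, adj_iso' e 8 1 1 h1, d2_iso' e 8 1 1 h1, adj_iso' e 8 2 2 h2, d2_iso' e 8 2 2 h2⟩
  have h3 : e 3 = 3 := step3 (e 3) ⟨ne_of_fix e 3 0 0 h0 (by decide), ne_of_fix e 3 1 1 h1 (by decide), ne_of_fix e 3 2 2 h2 (by decide), ne_of_fix e 3 8 8 h8 (by decide), adj_iso' e 3 0 0 h0, adj_iso' e 3 1 1 h1, adj_iso' e 3 2 2 h2, adj_iso' e 3 8 8 h8⟩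
  have h6 : e 6 = 6 := step6 (e 6) ⟨ne_of_fix e 6 0 0 h0 (by decide), ne_of_fix e 6 1 1 h1 (by decide), ne_of_fix e 6 2 2 h2 (by decide), ne_of_fix e 6 8 8 h8 (by decide), ne_of_fix e 6 3 3 h3 (by decide), adj_iso' e 6 0 0 h0, d2_iso' e 6 0 0 h0, adj_iso' e 6 1 1 h1, adj_iso' e 6 2 2 h2, d2_iso' e 6 2 2 h2, adj_iso' e 6 3 3 h3, adj_iso' e 6 8 8 h8⟩
  have h4 : e 4 = 4 := step4 (e 4) ⟨ne_of_fix e 4 0 0 h0 (by decide), ne_of_fix e 4 1 1 h1 (by decide), ne_of_fix e 4 2 2 h2 (by decide), ne_of_fix e 4 8 8 h8 (by decide), ne_of_fix e 4 3 3 h3 (by decide), ne_of_fix e 4 6 6 h6 (by decide), adj_iso' e 4 0 0 h0, adj_iso' e 4 1 1 h1, adj_iso' e 4 2 2 h2, adj_iso' e 4 3 3 h3, d2_iso' e 4 6 6 h6, adj_iso' e 4 8 8 h8⟩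
  have h5 : e 5 = 5 := step5 (e 5) ⟨ne_of_fix e 5 0 0 h0 (by decide), ne_of_fix e 5 1 1 h1 (by decide), ne_of_fix e 5 2 2 h2 (by decide), ne_of_fix e 5 8 8 h8 (by decide), ne_of_fix e 5 3 3 h3 (by decide), ne_of_fix e 5 6 6 h6 (by decide), ne_of_fix e 5 4 4 h4 (by decide), adj_iso' e 5 0 0 h0, adj_iso' e 5 6 6 h6⟩
  have h7 : e 7 = 7 := step7 (e 7) ⟨ne_of_fix e 7 0 0 h0 (by decide), ne_of_fix e 7 1 1 h1 (by decide), ne_of_fix e 7 2 2 h2 (by decide), ne_of_fix e 7 8 8 h8 (by decide), ne_of_fix e 7 3 3 h3 (by decide), ne_of_fix e 7 6 6 h6 (by decide), ne_of_fix e 7 4 4 h4 (by decide), ne_of_fix e 7 5 5 h5 (by decide), adj_iso' e 7 0 0 h0, adj_iso' e 7 1 1 h1, adj_iso' e 7 2 2 h2⟩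
  have h9 : e 9 = 9 := step9 (e 9) ⟨ne_of_fix e 9 0 0 h0 (by decide), ne_of_fix e 9 1 1 h1 (by decide), ne_of_fix e 9 2 2 h2 (by decide), ne_of_fix e 9 8 8 h8 (by decide), ne_of_fix e 9 3 3 h3 (by decide), ne_of_fix e 9 6 6 h6 (by decide), ne_of_fix e 9 4 4 h4 (by decide), ne_of_fix e 9 5 5 h5 (by decide), ne_of_fix e 9 7 7 h7 (by decide), adj_iso' e 9 0 0 h0, adj_iso' e 9 1 1 h1, adj_iso' e 9 4 4 h4, adj_iso' e 9 8 8 h8⟩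
  have h10 : e 10 = 10 := step10 (e 10) ⟨ne_of_fix e 10 0 0 h0 (by decide), ne_of_fix e 10 1 1 h1 (by decide), ne_of_fix e 10 2 2 h2 (by decide), ne_of_fix e 10 8 8 h8 (by decide), ne_of_fix e 10 3 3 h3 (by decide), ne_of_fix e 10 6 6 h6 (by decide), ne_of_fix e 10 4 4 h4 (by decide), ne_of_fix e 10 5 5 h5 (by decide), ne_of_fix e 10 7 7 h7 (by decide), ne_of_fix e 10 9 9 h9 (by decide), adj_iso' e 10 0 0 h0, adj_iso' e 10 1 1 h1, adj_iso' e 10 3 3 h3, adj_iso' e 10 6 6 h6, adj_iso' e 10 8 8 h8⟩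
  have h11 : e 11 = 11 := step11 (e 11) ⟨ne_of_fix e 11 0 0 h0 (by decide), ne_of_fix e 11 1 1 h1 (by decide), ne_of_fix e 11 2 2 h2 (by decide), ne_of_fix e 11 8 8 h8 (by decide), ne_of_fix e 11 3 3 h3 (by decide), ne_of_fix e 11 6 6 h6 (by decide), ne_of_fix e 11 4 4 h4 (by decide), ne_of_fix e 11 5 5 h5 (by decide), ne_of_fix e 11 7 7 h7 (by decide), ne_of_fix e 11 9 9 h9 (by decide), ne_of_fix e 11 10 10 h10 (by decide), adj_iso' e 11 0 0 h0, adj_iso' e 11 1 1 h1, adj_iso' e 11 3 3 h3, adj_iso' e 11 8 8 h8⟩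
  have h12 : e 12 = 12 := step12 (e 12) ⟨ne_of_fix e 12 0 0 h0 (by decide), ne_of_fix e 12 1 1 h1 (by decide), ne_of_fix e 12 2 2 h2 (by decide), ne_of_fix e 12 8 8 h8 (by decide), ne_of_fix e 12 3 3 h3 (by decide), ne_of_fix e 12 6 6 h6 (by decide), ne_of_fix e 12 4 4 h4 (by decide), ne_of_fix e 12 5 5 h5 (by decide), ne_of_fix e 12 7 7 h7 (by decide), ne_of_fix e 12 9 9 h9 (by decide), ne_of_fix e 12 10 10 h10 (by decide), ne_of_fix e 12 11 11 h11 (by decide), adj_iso' e 12 0 0 h0, adj_iso' e 12 1 1 h1⟩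
  have h13 : e 13 = 13 := step13 (e 13) ⟨ne_of_fix e 13 0 0 h0 (by decide), ne_of_fix e 13 1 1 h1 (by decide), ne_of_fix e 13 2 2 h2 (by decide), ne_of_fix e 13 8 8 h8 (by decide), ne_of_fix e 13 3 3 h3 (by decide), ne_of_fix e 13 6 6 h6 (by decide), ne_of_fix e 13 4 4 h4 (by decide), ne_of_fix e 13 5 5 h5 (by decide), ne_of_fix e 13 7 7 h7 (by decide), ne_of_fix e 13 9 9 h9 (by decide), ne_of_fix e 13 10 10 h10 (by decide), ne_of_fix e 13 11 11 h11 (by decide), ne_of_fix e 13 12 12 h12 (by decide), adj_iso' e 13 0 0 h0, adj_iso' e 13 8 8 h8⟩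
  have h14 : e 14 = 14 := step14 (e 14) ⟨ne_of_fix e 14 0 0 h0 (by decide), ne_of_fix e 14 1 1 h1 (by decide), ne_of_fix e 14 2 2 h2 (by decide), ne_of_fix e 14 8 8 h8 (by decide), ne_of_fix e 14 3 3 h3 (by decide), ne_of_fix e 14 6 6 h6 (by decide), ne_of_fix e 14 4 4 h4 (by decide), ne_of_fix e 14 5 5 h5 (by decide), ne_of_fix e 14 7 7 h7 (by decide), ne_of_fix e 14 9 9 h9 (by decide), ne_of_fix e 14 10 10 h10 (by decide), ne_of_fix e 14 11 11 h11 (by decide), ne_of_fix e 14 12 12 h12 (by decide), ne_of_fix e 14 13 13 h13 (by decide), adj_iso' e 14 0 0 h0⟩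
  have h15 : e 15 = 15 := step15 (e 15) ⟨ne_of_fix e 15 0 0 h0 (by decide), ne_of_fix e 15 1 1 h1 (by decide), ne_of_fix e 15 2 2 h2 (by decide), ne_of_fix e 15 8 8 h8 (by decide), ne_of_fix e 15 3 3 h3 (by decide), ne_of_fix e 15 6 6 h6 (by decide), ne_of_fix e 15 4 4 h4 (by decide), ne_of_fix e 15 5 5 h5 (by decide), ne_of_fix e 15 7 7 h7 (by decide), ne_of_fix e 15 9 9 h9 (by decide), ne_of_fix e 15 10 10 h10 (by decide), ne_of_fix e 15 11 11 h11 (by decide), ne_of_fix e 15 12 12 h12 (by decide), ne_of_fix e 15 13 13 h13 (by decide), ne_of_fix e 15 14 14 h14 (by decide)⟩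
  intro v; fin_cases v <;> assumption

def tblA : Fin 16 → Fin 16 := ![0,5,4,3,14,15,10,9,8,13,12,11,6,7,2,1]
def tblAinv : Fin 16 → Fin 16 := ![0,15,14,3,2,1,12,13,8,7,6,11,10,9,4,5]
def tblB : Fin 16 → Fin 16 := ![0,1,12,11,10,15,14,13,8,9,4,3,2,7,6,5]


def eqA : ZMod 16 ≃ ZMod 16 where
  toFun v := (tblA v : Fin 16)
  invFun v := (tblAinv v : Fin 16)
  left_inv := by intro v; fin_cases v <;> rfl
  right_inv := by intro v; fin_cases v <;> rfl

def eqB : ZMod 16 ≃ ZMod 16 where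
  toFun v := (tblB v : Fin 16)
  invFun v := (tblB v : Fin 16)
  left_inv := by intro v; fin_cases v <;> rfl
  right_inv := by intro v; fin_cases v <;> rfl

def eqR : ZMod 16 ≃ ZMod 16 where
  toFun v := 1 - v
  invFun v := 1 - v
  left_inv := by decide
  right_inv := by decide

def eqT (c : ZMod 8) : ZMod 16 ≃ ZMod 16 where
  toFun v := v + 2 * (c.val : ZMod 16)
  invFun v := v - 2 * (c.val : ZMod 16)
  left_inv := fun v => by ring_nf
  right_inv := fun v => by ring_nf

lemma eqA_adj : ∀ a b : ZMod 16, G.Adj (eqA a) (eqA b) ↔ G.Adj a b := by decide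
lemma eqB_adj : ∀ a b : ZMod 16, G.Adj (eqB a) (eqB b) ↔ G.Adj a b := by decide
lemma eqR_adj : ∀ a b : ZMod 16, G.Adj (eqR a) (eqR b) ↔ G.Adj a b := by decide
lemma eqT_adj : ∀ (c : ZMod 8) (a b : ZMod 16), G.Adj (eqT c a) (eqT c b) ↔ G.Adj a b := by decide

def autA : Aut := ⟨eqA, @fun a b => eqA_adj a b⟩
def autB : Aut := ⟨eqB, @fun a b => eqB_adj a b⟩
def autR : Aut := ⟨eqR, @fun a b => eqR_adj a b⟩
def autT (c : ZMod 8) : Aut := ⟨eqT c, @fun a b => eqT_adj c a b⟩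

def apow : Fin 3 → Aut := ![RelIso.refl _, autA, autA.trans autA]
def bpow : Fin 2 → Aut := ![RelIso.refl _, autB]
def rpow : Bool → Aut := fun b => if b then autR else RelIso.refl _

def psi (p : ZMod 8 × Bool × Fin 3 × Fin 2) : Aut :=
  ((bpow p.2.2.2).trans (apow p.2.2.1)).trans ((rpow p.2.1).trans (autT p.1))

set_option maxRecDepth 40000 in
lemma psi_triple_inj : ∀ p q : ZMod 8 × Bool × Fin 3 × Fin 2,
    ((psi p) 0, (psi p) 1, (psi p) 2) = ((psi q) 0, (psi q) 1, (psi q) 2) → p = q := by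
  decide

def T : Finset (ZMod 16 × ZMod 16 × ZMod 16) :=
  Finset.univ.filter fun t => G.Adj t.1 t.2.1 ∧ G.Adj t.2.1 t.2.2 ∧ t.1 ≠ t.2.2

set_option maxRecDepth 100000 in
lemma cardT : T.card = 96 := by decide

def phi (e : Aut) : {t // t ∈ T} :=
  ⟨(e 0, e 1, e 2), by
    simp only [T, Finset.mem_filter, Finset.mem_univ, true_and]
    refine ⟨(adj_iso e 0 1).mpr (by decide), (adj_iso e 1 2).mpr (by decide), ?_⟩
    exact fun h => (by decide : (0 : ZMod 16) ≠ 2) (e.injective h)⟩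

lemma phi_inj : Function.Injective phi := by
  intro e f h
  have h' : ((e 0 : ZMod 16), e 1, e 2) = (f 0, f 1, f 2) := congrArg Subtype.val h
  have h0 : e 0 = f 0 := congrArg Prod.fst h'
  have h1 : e 1 = f 1 := congrArg Prod.fst (congrArg Prod.snd h')
  have h2 : e 2 = f 2 := congrArg Prod.snd (congrArg Prod.snd h')
  have key : ∀ v, (e.trans f.symm) v = v := by
    apply rigid
    · show f.symm (e 0) = 0
      rw [h0]; exact f.symm_apply_apply 0
    · show f.symm (e 1) = 1
      rw [h1]; exact f.symm_apply_apply 1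
    · show f.symm (e 2) = 2
      rw [h2]; exact f.symm_apply_apply 2
  apply RelIso.ext
  intro v
  have hv : f.symm (e v) = v := key v
  calc e v = f (f.symm (e v)) := (f.apply_symm_apply (e v)).symm
    _ = f v := by rw [hv]

instance : Finite Aut := Finite.of_injective phi phi_inj

lemma psi_inj : Function.Injective psi := by
  intro p q h
  exact psi_triple_inj p q (by rw [h])

end MKAux

/-- The automorphism group of the Moebius–Kantor graph has order 96. -/
theorem moebiusKantor_card_aut :
    Nat.card (moebiusKantorGraph ≃g moebiusKantorGraph) = 96 := by
  have upper : Nat.card MKAux.Aut ≤ 96 := by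
    have := Nat.card_le_card_of_injective MKAux.phi MKAux.phi_inj
    rwa [Nat.card_eq_fintype_card (α := {t // t ∈ MKAux.T}), Fintype.card_coe, MKAux.cardT] at this
  have lower : 96 ≤ Nat.card MKAux.Aut := by
    have := Nat.card_le_card_of_injective MKAux.psi MKAux.psi_inj
    rwa [Nat.card_eq_fintype_card (α := ZMod 8 × Bool × Fin 3 × Fin 2),
      show Fintype.card (ZMod 8 × Bool × Fin 3 × Fin 2) = 96 from rfl] at this
  exact le_antisymm upper lower
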